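/- There exists a constant c > 0 such that for every n ≥ 2, the identity map I from Z_2^n to ℓ_∞^{2n} (sending (a,b) ∈ ℝⁿ×ℝⁿ to itself with the supremum norm) satisfies Π₁(I) ≥ c·√n·log n. -/
import Mathlib


open scoped BigOperators

/-- The Euclidean norm on `ℝⁿ`. -/
noncomputable def l2 {n : ℕ} (b : Fin n → ℝ) : ℝ := Real.sqrt (∑ j, b j ^ 2)

/-- The Kalton–Peck map `F(b)_j = b_j log(|b_j|/‖b‖₂)`, with `F(b)_j = 0` when `b_j = 0`. -/
noncomputable def KPF {n : ℕ} (b : Fin n → ℝ) : Fin n → ℝ :=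
  fun j => if b j = 0 then 0 else b j * Real.log (|b j| / l2 b)

/-- The Kalton–Peck quasi-norm `‖(a,b)‖ = ‖b‖₂ + ‖a - F(b)‖₂` on `ℝⁿ × ℝⁿ`. -/
noncomputable def znorm {n : ℕ} (x : (Fin n → ℝ) × (Fin n → ℝ)) : ℝ :=
  l2 x.2 + l2 (x.1 - KPF x.2)

/-- Operator "norm" `sup_{x ≠ 0} N_W(T x) / N_V(x)` of a map `T` between spaces
equipped with (quasi-)norms `N_V`, `N_W`. -/
noncomputable def ratioSup {V W : Type*} [Zero V] (NV : V → ℝ) (NW : W → ℝ) (T : V → W) : ℝ :=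
  ⨆ x : {x : V // x ≠ 0}, NW (T x.1) / NV x.1

/-- The supremum norm on `ℝⁿ × ℝⁿ ≅ ℝ^{2n}`: the max of the absolute values of all `2n`
coordinates. -/
noncomputable def linf {n : ℕ} (x : (Fin n → ℝ) × (Fin n → ℝ)) : ℝ :=
  max (⨆ j, |x.1 j|) (⨆ j, |x.2 j|)

/-- The 1-summing norm `Π₁(u)` of a map `u` between spaces equipped with
(quasi-)norms `N_V`, `N_W`: the least `C > 0` such that
`∑ᵢ N_W(u xᵢ) ≤ C · max_{ε ∈ {−1,1}^m} N_V(∑ᵢ εᵢ xᵢ)` for all finite families `x`. -/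
noncomputable def pi1 {V W : Type*} [AddCommGroup V] [Module ℝ V]
    (NV : V → ℝ) (NW : W → ℝ) (u : V → W) : ℝ :=
  sInf {C : ℝ | 0 < C ∧ ∀ (m : ℕ) (x : Fin m → V),
    ∑ i, NW (u (x i)) ≤ C * ⨆ ε : Fin m → Bool,
      NV (∑ i, (if ε i then (1 : ℝ) else -1) • x i)}

lemma l2_nonneg {n : ℕ} (b : Fin n → ℝ) : 0 ≤ l2 b := Real.sqrt_nonneg _

lemma znorm_nonneg {n : ℕ} (x : (Fin n → ℝ) × (Fin n → ℝ)) : 0 ≤ znorm x :=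
  add_nonneg (l2_nonneg _) (l2_nonneg _)

lemma abs_le_l2 {n : ℕ} (b : Fin n → ℝ) (j : Fin n) : |b j| ≤ l2 b := by
  rw [l2, ← Real.sqrt_sq_eq_abs]
  exact Real.sqrt_le_sqrt (Finset.single_le_sum (fun i _ => sq_nonneg (b i))
    (Finset.mem_univ j))

lemma abs_KPF_le {n : ℕ} (b : Fin n → ℝ) (j : Fin n) : |KPF b j| ≤ l2 b := by
  unfold KPF
  by_cases h : b j = 0
  · simpa [h] using l2_nonneg b
  · simp only [h, if_false]
    have hb : 0 < |b j| := abs_pos.mpr h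
    have hl : 0 < l2 b := lt_of_lt_of_le hb (abs_le_l2 b j)
    have ht1 : |b j| / l2 b ≤ 1 := (div_le_one hl).mpr (abs_le_l2 b j)
    have htpos : 0 < |b j| / l2 b := div_pos hb hl
    have hlog : Real.log (|b j| / l2 b) ≤ 0 := Real.log_nonpos htpos.le ht1
    rw [abs_mul, abs_of_nonpos hlog]
    have hinv : -Real.log (|b j| / l2 b) = Real.log (l2 b / |b j|) := by
      rw [← Real.log_inv, inv_div]
    rw [hinv]
    have hle := Real.log_le_sub_one_of_pos (div_pos hl hb)
    calc |b j| * Real.log (l2 b / |b j|) ≤ |b j| * (l2 b / |b j| - 1) :=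
          mul_le_mul_of_nonneg_left hle (abs_nonneg _)
      _ = l2 b - |b j| := by field_simp
      _ ≤ l2 b := by linarith

lemma linf_le_znorm {n : ℕ} (x : (Fin n → ℝ) × (Fin n → ℝ)) : linf x ≤ znorm x := by
  have h0 : 0 ≤ znorm x := znorm_nonneg x
  apply max_le
  · apply Real.iSup_le _ h0
    intro j
    have h1 : |x.1 j - KPF x.2 j| ≤ l2 (x.1 - KPF x.2) := by
      simpa using abs_le_l2 (x.1 - KPF x.2) j
    have h2 := abs_KPF_le x.2 j
    have h3 : |x.1 j| ≤ |x.1 j - KPF x.2 j| + |KPF x.2 j| := by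
      have := abs_add_le (x.1 j - KPF x.2 j) (KPF x.2 j)
      simpa using this
    unfold znorm; linarith
  · apply Real.iSup_le _ h0
    intro j
    have := abs_le_l2 x.2 j
    unfold znorm
    linarith [l2_nonneg (x.1 - KPF x.2)]

lemma pi1_mem (n : ℕ) :
    ((2 * (n : ℝ) + 1) ∈ {C : ℝ | 0 < C ∧ ∀ (m : ℕ) (x : Fin m → (Fin n → ℝ) × (Fin n → ℝ)),
      ∑ i, linf ((fun x => x) (x i)) ≤ C * ⨆ ε : Fin m → Bool,
        znorm (∑ i, (if ε i then (1 : ℝ) else -1) • x i)}) := by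
  constructor
  · positivity
  intro m x
  set S := ⨆ ε : Fin m → Bool, znorm (∑ i, (if ε i then (1 : ℝ) else -1) • x i) with hS
  have hbdd : BddAbove (Set.range fun ε : Fin m → Bool =>
      znorm (∑ i, (if ε i then (1 : ℝ) else -1) • x i)) :=
    Set.Finite.bddAbove (Set.finite_range _)
  have hS0 : 0 ≤ S := le_trans (znorm_nonneg _) (le_ciSup hbdd (fun _ => true))
  have key1 : ∀ j : Fin n, ∑ i, |(x i).1 j| ≤ S := by
    intro j
    set ε : Fin m → Bool := fun i => decide (0 ≤ (x i).1 j) with hε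
    set Y := ∑ i, (if ε i then (1 : ℝ) else -1) • x i with hY
    have hsum : Y.1 j = ∑ i, |(x i).1 j| := by
      rw [hY, Prod.fst_sum, Finset.sum_apply]
      apply Finset.sum_congr rfl
      intro i _
      by_cases h : 0 ≤ (x i).1 j
      · simp [hε, h, abs_of_nonneg h]
      · simp [hε, h, abs_of_neg (lt_of_not_ge h)]
    have h1 : ∑ i, |(x i).1 j| ≤ |Y.1 j| := by rw [hsum]; exact le_abs_self _
    have h2 : |Y.1 j| ≤ linf Y := by
      refine le_trans ?_ (le_max_left _ _)
      exact le_ciSup (f := fun j => |Y.1 j|) (Set.Finite.bddAbove (Set.finite_range _)) j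
    have h3 : znorm Y ≤ S := le_ciSup hbdd ε
    exact h1.trans (h2.trans ((linf_le_znorm Y).trans h3))
  have key2 : ∀ j : Fin n, ∑ i, |(x i).2 j| ≤ S := by
    intro j
    set ε : Fin m → Bool := fun i => decide (0 ≤ (x i).2 j) with hε
    set Y := ∑ i, (if ε i then (1 : ℝ) else -1) • x i with hY
    have hsum : Y.2 j = ∑ i, |(x i).2 j| := by
      rw [hY, Prod.snd_sum, Finset.sum_apply]
      apply Finset.sum_congr rfl
      intro i _
      by_cases h : 0 ≤ (x i).2 j
      · simp [hε, h, abs_of_nonneg h]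
      · simp [hε, h, abs_of_neg (lt_of_not_ge h)]
    have h1 : ∑ i, |(x i).2 j| ≤ |Y.2 j| := by rw [hsum]; exact le_abs_self _
    have h2 : |Y.2 j| ≤ linf Y := by
      refine le_trans ?_ (le_max_right _ _)
      exact le_ciSup (f := fun j => |Y.2 j|) (Set.Finite.bddAbove (Set.finite_range _)) j
    have h3 : znorm Y ≤ S := le_ciSup hbdd ε
    exact h1.trans (h2.trans ((linf_le_znorm Y).trans h3))
  have step1 : ∀ i, linf (x i) ≤ (∑ j, |(x i).1 j|) + ∑ j, |(x i).2 j| := by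
    intro i
    have hn1 : (0:ℝ) ≤ ∑ j, |(x i).1 j| := Finset.sum_nonneg fun j _ => abs_nonneg _
    have hn2 : (0:ℝ) ≤ ∑ j, |(x i).2 j| := Finset.sum_nonneg fun j _ => abs_nonneg _
    apply max_le
    · refine le_trans (Real.iSup_le (fun j => ?_) hn1) (by linarith)
      exact Finset.single_le_sum (f := fun j => |(x i).1 j|)
        (fun k _ => abs_nonneg _) (Finset.mem_univ j)
    · refine le_trans (Real.iSup_le (fun j => ?_) hn2) (by linarith)
      exact Finset.single_le_sum (f := fun j => |(x i).2 j|)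
        (fun k _ => abs_nonneg _) (Finset.mem_univ j)
  calc ∑ i, linf (x i) ≤ ∑ i, ((∑ j, |(x i).1 j|) + ∑ j, |(x i).2 j|) :=
        Finset.sum_le_sum fun i _ => step1 i
    _ = (∑ j : Fin n, ∑ i, |(x i).1 j|) + ∑ j : Fin n, ∑ i, |(x i).2 j| := by
        rw [Finset.sum_add_distrib]
        congr 1 <;> exact Finset.sum_comm
    _ ≤ (∑ _j : Fin n, S) + ∑ _j : Fin n, S := by
        gcongr with j _ j _
        exacts [key1 j, key2 j]
    _ = 2 * n * S := by simp; ring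
    _ ≤ (2 * n + 1) * S := by nlinarith

/-- The 1-summing norm of the identity `Z_2^n → ℓ_∞^{2n}` is at least `c·√n·log n`. -/
theorem pi1_znorm_to_linf_lower :
    ∃ c : ℝ, 0 < c ∧ ∀ n : ℕ, 2 ≤ n →
      c * Real.sqrt n * Real.log n ≤
        pi1 znorm linf (fun x : (Fin n → ℝ) × (Fin n → ℝ) => x) := by
  refine ⟨1/2, by norm_num, ?_⟩
  intro n hn
  have hn1 : (1 : ℝ) ≤ n := by exact_mod_cast Nat.one_le_of_lt hn
  have hnpos : (0 : ℝ) < n := by linarith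
  have hsq : (0 : ℝ) < Real.sqrt n := Real.sqrt_pos.mpr hnpos
  set L : ℝ := Real.log n / 2 with hL
  have hlog0 : 0 ≤ Real.log n := Real.log_nonneg hn1
  have hL0 : 0 ≤ L := by rw [hL]; positivity
  set x : Fin n → (Fin n → ℝ) × (Fin n → ℝ) :=
    fun i => (fun j => if i = j then -L else 0, fun j => if i = j then 1 else 0) with hx
  have hzn : ∀ ε : Fin n → Bool,
      znorm (∑ i, (if ε i then (1 : ℝ) else -1) • x i) = Real.sqrt n := by
    intro ε
    set c : Fin n → ℝ := fun i => if ε i then (1 : ℝ) else -1 with hc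
    have hc1 : ∀ i, |c i| = 1 := by intro i; by_cases h : ε i <;> simp [hc, h]
    have hcne : ∀ i, c i ≠ 0 := by
      intro i h; have := hc1 i; rw [h] at this; simp at this
    set Y := ∑ i, c i • x i with hY
    have hY1 : ∀ j, Y.1 j = -L * c j := by
      intro j
      rw [hY, Prod.fst_sum, Finset.sum_apply]
      simp only [hx, Prod.smul_fst, Pi.smul_apply, smul_eq_mul]
      rw [Finset.sum_eq_single j]
      · simp [mul_comm]
      · intro i _ hij; simp [hij]
      · intro h; simp at h
    have hY2 : ∀ j, Y.2 j = c j := by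
      intro j
      rw [hY, Prod.snd_sum, Finset.sum_apply]
      simp only [hx, Prod.smul_snd, Pi.smul_apply, smul_eq_mul]
      rw [Finset.sum_eq_single j]
      · simp
      · intro i _ hij; simp [hij]
      · intro h; simp at h
    have hsq2 : ∀ j, Y.2 j ^ 2 = 1 := by
      intro j; rw [hY2 j, ← sq_abs, hc1 j]; norm_num
    have hl2 : l2 Y.2 = Real.sqrt n := by
      unfold l2
      rw [Finset.sum_congr rfl fun j _ => hsq2 j]
      simp
    have hKPF : ∀ j, KPF Y.2 j = -L * c j := by
      intro j
      unfold KPF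
      rw [hY2 j]
      simp only [hcne j, if_false]
      rw [hc1 j, hl2, one_div, Real.log_inv, Real.log_sqrt hnpos.le, hL]
      ring
    have hzero : Y.1 - KPF Y.2 = 0 := by
      funext j
      simp [hY1 j, hKPF j]
    rw [znorm, hzero, hl2]
    unfold l2
    simp
  have hsup : (⨆ ε : Fin n → Bool,
      znorm (∑ i, (if ε i then (1 : ℝ) else -1) • x i)) = Real.sqrt n := by
    simp only [hzn]
    exact ciSup_const
  have hlinfge : ∀ i, L ≤ linf (x i) := by
    intro i
    have h1 : |(x i).1 i| = L := by simp [hx, abs_of_nonneg hL0]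
    refine le_trans ?_ (le_max_left _ _)
    rw [← h1]
    exact le_ciSup (f := fun j => |(x i).1 j|) (Set.Finite.bddAbove (Set.finite_range _)) i
  have hsumge : (n : ℝ) * L ≤ ∑ i, linf (x i) := by
    calc (n : ℝ) * L = ∑ _i : Fin n, L := by simp [mul_comm]
      _ ≤ ∑ i, linf (x i) := Finset.sum_le_sum fun i _ => hlinfge i
  rw [pi1]
  apply le_csInf ⟨_, pi1_mem n⟩
  intro C hC
  obtain ⟨hCpos, hCbd⟩ := hC
  have h := hCbd n x
  rw [hsup] at h
  have hnl : (n : ℝ) * L ≤ C * Real.sqrt n := le_trans hsumge h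
  have hmul : Real.sqrt n * Real.sqrt n = n := Real.mul_self_sqrt hnpos.le
  have : (Real.sqrt n * L) * Real.sqrt n ≤ C * Real.sqrt n := by nlinarith
  have hfin : Real.sqrt n * L ≤ C := le_of_mul_le_mul_right this hsq
  calc 1/2 * Real.sqrt n * Real.log n = Real.sqrt n * L := by rw [hL]; ring
    _ ≤ C := hfin
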